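/- arXiv:1311.4592 — 2 statements merged into one kernel-verified Lean document; each statement's English description precedes it below -/
import Mathlib

section
/- Let k be a field and q ∈ k* with q ∉ {1, -1}. Let Λ = k_q[x,y] be the quantum plane, i.e. the k-algebra generated by x, y with relation x·y = q·y·x. Then every k-algebra automorphism φ of Λ satisfies φ(x) = a·x and φ(y) = b·y for some a, b ∈ k*; hence Aut_k(Λ) ≅ (k*)². -/
/-- Defining relation of the quantum plane `k_q[x,y]`: `x·y = q·(y·x)`. -/
inductive QPlaneRel (k : Type*) [Field k] (q : k) :
    FreeAlgebra k (Fin 2) → FreeAlgebra k (Fin 2) → Prop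
  | rel : QPlaneRel k q (FreeAlgebra.ι k 0 * FreeAlgebra.ι k 1)
      (q • (FreeAlgebra.ι k 1 * FreeAlgebra.ι k 0))

/-- The quantum plane `k_q[x,y]`. -/
abbrev QPlane (k : Type*) [Field k] (q : k) := RingQuot (QPlaneRel k q)

noncomputable def qpX (k : Type*) [Field k] (q : k) : QPlane k q :=
  RingQuot.mkAlgHom k (QPlaneRel k q) (FreeAlgebra.ι k 0)

noncomputable def qpY (k : Type*) [Field k] (q : k) : QPlane k q :=
  RingQuot.mkAlgHom k (QPlaneRel k q) (FreeAlgebra.ι k 1)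

/-!
The monomials `yᵐ xⁿ` form a basis of `k_q[x,y]` (seen through a faithful representation on
`k[X₀, X₁]`), and a product of two monomials is a nonzero multiple of a monomial, so leading
terms for any additive total order on exponents multiply. If `u = φ x` and `v = φ y` have leading
exponents `du` and `dv`, comparing leading coefficients in `u v = q v u` gives
`q ^ (du₂ dv₁) = q ^ (1 + dv₂ du₁)`. As `q ≠ 1`, the vectors `du`, `dv` are linearly
independent, so distinct `vᵐ uⁿ` have distinct leading exponents `m dv + n du`. Expanding `x` and
`y` in these forces `{du, dv} = {(0,1), (1,0)}`, and `q² ≠ 1` excludes `du = (1,0)`. Doing this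
for the lexicographic order and for its reverse shows that `φ x` and `φ y` are monomials.
-/

section QCommuting

variable {R A : Type*} [CommRing R] [Ring A] [Algebra R A] {q : R} {u v : A}

theorem pow_mul_eq_smul_of_mul_eq_smul (h : u * v = q • (v * u)) (n : ℕ) :
    u ^ n * v = q ^ n • (v * u ^ n) := by
  induction n with
  | zero => simp
  | succ n ih =>
    rw [pow_succ, mul_assoc, h, mul_smul_comm, ← mul_assoc, ih, smul_mul_assoc, mul_assoc,
      ← pow_succ, smul_smul, ← pow_succ']

theorem pow_mul_pow_eq_smul_of_mul_eq_smul (h : u * v = q • (v * u)) (m n : ℕ) :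
    u ^ m * v ^ n = q ^ (m * n) • (v ^ n * u ^ m) := by
  induction n with
  | zero => simp
  | succ n ih =>
    rw [pow_succ, ← mul_assoc, ih, smul_mul_assoc, mul_assoc, pow_mul_eq_smul_of_mul_eq_smul h,
      mul_smul_comm, ← mul_assoc, ← pow_succ, smul_smul, ← pow_add, Nat.mul_succ]

variable (u v) in
def orderedMonomial (p : ℕ × ℕ) : A := v ^ p.1 * u ^ p.2

theorem orderedMonomial_mul (h : u * v = q • (v * u)) (p r : ℕ × ℕ) :
    orderedMonomial u v p * orderedMonomial u v r =
      q ^ (p.2 * r.1) • orderedMonomial u v (p + r) := by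
  simp only [orderedMonomial, Prod.fst_add, Prod.snd_add, pow_add]
  rw [mul_assoc, ← mul_assoc (u ^ p.2), pow_mul_pow_eq_smul_of_mul_eq_smul h, smul_mul_assoc,
    mul_smul_comm, ← mul_assoc, mul_assoc, mul_assoc, mul_assoc]

theorem span_orderedMonomial_eq_top (h : u * v = q • (v * u))
    (hadj : Algebra.adjoin R {u, v} = ⊤) :
    Submodule.span R (Set.range (orderedMonomial u v)) = ⊤ := by
  set S := Submodule.span R (Set.range (orderedMonomial u v))
  have hmul : S * S ≤ S := by
    rw [Submodule.span_mul_span, Submodule.span_le]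
    rintro _ ⟨_, ⟨p, rfl⟩, _, ⟨r, rfl⟩, rfl⟩
    change orderedMonomial u v p * orderedMonomial u v r ∈ S
    rw [orderedMonomial_mul h]
    exact S.smul_mem _ (Submodule.subset_span ⟨p + r, rfl⟩)
  have hone : (1 : A) ∈ S := Submodule.subset_span ⟨0, by simp [orderedMonomial]⟩
  have hadj_le : Algebra.adjoin R {u, v} ≤
      S.toSubalgebra hone fun _ _ hx hy => hmul (Submodule.mul_mem_mul hx hy) := by
    rw [Algebra.adjoin_le_iff, Set.pair_subset_iff]
    exact ⟨Submodule.subset_span ⟨(0, 1), by simp [orderedMonomial]⟩,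
      Submodule.subset_span ⟨(1, 0), by simp [orderedMonomial]⟩⟩
  rw [hadj] at hadj_le
  exact eq_top_iff.mpr fun w _ => hadj_le Algebra.mem_top

end QCommuting

theorem injective_smul_add_smul {a b : ℕ × ℕ} (h : a.1 * b.2 ≠ a.2 * b.1) :
    Function.Injective fun p : ℕ × ℕ => p.1 • a + p.2 • b := by
  rintro ⟨m, n⟩ ⟨m', n'⟩ hp
  obtain ⟨a₁, a₂⟩ := a
  obtain ⟨b₁, b₂⟩ := b
  simp only [Prod.ext_iff, Prod.fst_add, Prod.snd_add, Prod.smul_fst, Prod.smul_snd,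
    smul_eq_mul] at hp h ⊢
  zify at hp h ⊢
  have hdet : (a₁ * b₂ - a₂ * b₁ : ℤ) ≠ 0 := sub_ne_zero.mpr h
  have hm : ((m - m') * (a₁ * b₂ - a₂ * b₁) : ℤ) = 0 := by
    linear_combination (b₂ : ℤ) * hp.1 - (b₁ : ℤ) * hp.2
  have hn : ((n - n') * (a₁ * b₂ - a₂ * b₁) : ℤ) = 0 := by
    linear_combination (a₁ : ℤ) * hp.2 - (a₂ : ℤ) * hp.1
  exact ⟨sub_eq_zero.mp ((mul_eq_zero.mp hm).resolve_right hdet),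
    sub_eq_zero.mp ((mul_eq_zero.mp hn).resolve_right hdet)⟩

theorem eq_or_eq_of_smul_add_smul_eq {a b p z : ℕ × ℕ} (ha : a ≠ 0) (hb : b ≠ 0)
    (hz : z.1 + z.2 = 1) (h : p.1 • a + p.2 • b = z) : a = z ∨ b = z := by
  obtain ⟨m, n⟩ := p
  obtain ⟨a₁, a₂⟩ := a
  obtain ⟨b₁, b₂⟩ := b
  obtain ⟨z₁, z₂⟩ := z
  simp only [ne_eq, Prod.ext_iff, Prod.fst_add, Prod.snd_add, Prod.smul_fst, Prod.smul_snd,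
    smul_eq_mul, Prod.fst_zero, Prod.snd_zero] at ha hb hz h ⊢
  obtain ⟨h₁, h₂⟩ := h
  have ha' : 1 ≤ a₁ + a₂ := by omega
  have hb' : 1 ≤ b₁ + b₂ := by omega
  rcases m with _ | _ | m
  · rcases n with _ | _ | n
    · omega
    · right; simp_all
    · nlinarith
  · rcases n with _ | n
    · left; simp_all
    · nlinarith
  · nlinarith

namespace QPlane

variable {k : Type*} [Field k] {q : k}

theorem qpX_mul_qpY : qpX k q * qpY k q = q • (qpY k q * qpX k q) := by
  simpa [qpX, qpY] using RingQuot.mkAlgHom_rel k (QPlaneRel.rel (k := k) (q := q))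

theorem algHom_ext {A : Type*} [Semiring A] [Algebra k A] {f g : QPlane k q →ₐ[k] A}
    (hx : f (qpX k q) = g (qpX k q)) (hy : f (qpY k q) = g (qpY k q)) : f = g :=
  RingQuot.ringQuot_ext' _ _ _ <| FreeAlgebra.hom_ext <| funext fun i => by
    fin_cases i
    exacts [hx, hy]

theorem adjoin_qpX_qpY : Algebra.adjoin k {qpX k q, qpY k q} = ⊤ := by
  have h := congrArg (Subalgebra.map (RingQuot.mkAlgHom k (QPlaneRel k q)))
    (FreeAlgebra.adjoin_range_ι k (Fin 2))
  have hrange : Set.range (RingQuot.mkAlgHom k (QPlaneRel k q) ∘ FreeAlgebra.ι k) =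
      {qpX k q, qpY k q} := by
    ext w
    simp [Fin.exists_fin_two, eq_comm, qpX, qpY]
  rwa [AlgHom.map_adjoin, Algebra.map_top, (AlgHom.range_eq_top _).mpr
    (RingQuot.mkAlgHom_surjective k _), ← Set.range_comp, hrange] at h

section Representation

open MvPolynomial

variable (k q) in
noncomputable def xAction : Module.End k (MvPolynomial (Fin 2) k) :=
  LinearMap.mulLeft k (X 0) ∘ₗ
    (aeval ![X 0, q • X 1] : MvPolynomial (Fin 2) k →ₐ[k] _).toLinearMap

variable (k) in
noncomputable def yAction : Module.End k (MvPolynomial (Fin 2) k) :=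
  LinearMap.mulLeft k (X 1)

theorem xAction_mul_yAction : xAction k q * yAction k = q • (yAction k * xAction k q) := by
  refine LinearMap.ext fun f => ?_
  simp [xAction, yAction, mul_left_comm]

variable (k q) in
noncomputable def polyRep : QPlane k q →ₐ[k] Module.End k (MvPolynomial (Fin 2) k) :=
  RingQuot.liftAlgHom k ⟨FreeAlgebra.lift k ![xAction k q, yAction k], by
    rintro _ _ ⟨⟩
    simp [xAction_mul_yAction]⟩

theorem polyRep_orderedMonomial_one (p : ℕ × ℕ) :
    polyRep k q (orderedMonomial (qpX k q) (qpY k q) p) 1 = X 1 ^ p.1 * X 0 ^ p.2 := by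
  have hx : ∀ n, (xAction k q ^ n) 1 = X 0 ^ n := by
    intro n
    induction n with
    | zero => simp
    | succ n ih =>
      rw [pow_succ', Module.End.mul_apply, ih]
      simp [xAction, pow_succ']
  have hy : ∀ n f, (yAction k ^ n) f = X 1 ^ n * f := by
    intro n f
    induction n with
    | zero => simp
    | succ n ih =>
      rw [pow_succ', Module.End.mul_apply, ih]
      simp [yAction, pow_succ', mul_assoc]
  simp [orderedMonomial, polyRep, qpX, qpY, hx, hy]

theorem linearIndependent_orderedMonomial :
    LinearIndependent k (orderedMonomial (qpX k q) (qpY k q)) := by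
  let exponent (p : ℕ × ℕ) : Fin 2 →₀ ℕ := Finsupp.single 1 p.1 + Finsupp.single 0 p.2
  have hexp : Function.Injective exponent := by
    intro p r h
    have h0 := DFunLike.congr_fun h 0
    have h1 := DFunLike.congr_fun h 1
    simp [exponent] at h0 h1
    exact Prod.ext h1 h0
  have hpoly := (basisMonomials (Fin 2) k).linearIndependent.comp _ hexp
  have hcomp : (LinearMap.applyₗ (1 : MvPolynomial (Fin 2) k) ∘ₗ (polyRep k q).toLinearMap) ∘
      orderedMonomial (qpX k q) (qpY k q) = basisMonomials (Fin 2) k ∘ exponent := by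
    ext p : 1
    simp [exponent, polyRep_orderedMonomial_one, X_pow_eq_monomial, monomial_mul]
  exact LinearIndependent.of_comp _ (by rw [hcomp]; exact hpoly)

end Representation

variable (k q) in
noncomputable def basis : Module.Basis (ℕ × ℕ) k (QPlane k q) :=
  .mk linearIndependent_orderedMonomial
    (span_orderedMonomial_eq_top qpX_mul_qpY adjoin_qpX_qpY).ge

theorem basis_apply (p : ℕ × ℕ) : basis k q p = orderedMonomial (qpX k q) (qpY k q) p :=
  Module.Basis.mk_apply ..

theorem basis_zero : basis k q 0 = 1 := by simp [basis_apply, orderedMonomial]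

theorem basis_zero_one : basis k q (0, 1) = qpX k q := by simp [basis_apply, orderedMonomial]

theorem basis_one_zero : basis k q (1, 0) = qpY k q := by simp [basis_apply, orderedMonomial]

theorem basis_mul_basis (p r : ℕ × ℕ) :
    basis k q p * basis k q r = q ^ (p.2 * r.1) • basis k q (p + r) := by
  simp only [basis_apply]
  exact orderedMonomial_mul qpX_mul_qpY p r

theorem basis_repr_mul (w₁ w₂ : QPlane k q) (e : ℕ × ℕ) :
    (basis k q).repr (w₁ * w₂) e =
      ∑ d ∈ ((basis k q).repr w₁).support ×ˢ ((basis k q).repr w₂).support,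
        if d.1 + d.2 = e then
          q ^ (d.1.2 * d.2.1) * (basis k q).repr w₁ d.1 * (basis k q).repr w₂ d.2
        else 0 := by
  conv_lhs => rw [← (basis k q).linearCombination_repr w₁,
    ← (basis k q).linearCombination_repr w₂]
  simp only [Finsupp.linearCombination_apply, Finsupp.sum, Finset.sum_mul_sum,
    ← Finset.sum_product', map_sum, Finsupp.finsetSum_apply]
  refine Finset.sum_congr rfl fun d _ => ?_
  rw [smul_mul_smul_comm, basis_mul_basis, smul_smul, map_smul, Module.Basis.repr_self,
    Finsupp.smul_apply, Finsupp.single_apply]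
  split_ifs <;> simp [mul_comm, mul_left_comm]

section Leading

variable {Γ : Type*} [AddCommMonoid Γ] [LinearOrder Γ] {ord : ℕ × ℕ →+ Γ}

variable (ord) in
def IsLeading (w : QPlane k q) (d : ℕ × ℕ) : Prop :=
  (basis k q).repr w d ≠ 0 ∧ ∀ e, (basis k q).repr w e ≠ 0 → ord e ≤ ord d

theorem exists_isLeading {w : QPlane k q} (hw : w ≠ 0) : ∃ d, IsLeading ord w d := by
  have hs : ((basis k q).repr w).support.Nonempty := by simpa using hw
  obtain ⟨d, hd, hmax⟩ := Finset.exists_max_image _ ord hs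
  exact ⟨d, Finsupp.mem_support_iff.mp hd, fun e he => hmax e (Finsupp.mem_support_iff.mpr he)⟩

theorem IsLeading.eq (hord : Function.Injective ord) {w : QPlane k q} {d d' : ℕ × ℕ}
    (h : IsLeading ord w d) (h' : IsLeading ord w d') : d = d' :=
  hord (le_antisymm (h'.2 d h.1) (h.2 d' h'.1))

theorem isLeading_basis (d : ℕ × ℕ) : IsLeading ord (basis k q d) d := by
  refine ⟨by simp, fun e he => ?_⟩
  rw [Module.Basis.repr_self, Finsupp.single_apply] at he
  rw [of_not_not fun hde => he (if_neg hde)]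

theorem exists_isLeading_linearCombination {ι : Type*} {W : ι → QPlane k q} {L : ι → ℕ × ℕ}
    (hL : Function.Injective (ord ∘ L)) (hW : ∀ i, IsLeading ord (W i) (L i))
    {c : ι →₀ k} (hc : c ≠ 0) : ∃ i, IsLeading ord (Finsupp.linearCombination k W c) (L i) := by
  have hcoeff : ∀ e, (basis k q).repr (Finsupp.linearCombination k W c) e =
      ∑ i ∈ c.support, c i * (basis k q).repr (W i) e := by
    intro e
    simp [Finsupp.linearCombination_apply, Finsupp.sum, Finsupp.finsetSum_apply]
  obtain ⟨ν, hν, hmax⟩ := Finset.exists_max_image c.support (ord ∘ L)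
    (Finsupp.support_nonempty_iff.mpr hc)
  refine ⟨ν, ?_, fun e he => ?_⟩
  · rw [hcoeff, Finset.sum_eq_single ν _ fun h => absurd hν h]
    · exact mul_ne_zero (Finsupp.mem_support_iff.mp hν) (hW ν).1
    · intro i hi hiν
      refine mul_eq_zero_of_right _ (not_not.mp fun hne => hiν (hL ?_))
      exact le_antisymm (hmax i hi) ((hW i).2 _ hne)
  · rw [hcoeff] at he
    obtain ⟨i, hi, hne⟩ := Finset.exists_ne_zero_of_sum_ne_zero he
    exact ((hW i).2 e (right_ne_zero_of_mul hne)).trans (hmax i hi)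

variable [IsOrderedCancelAddMonoid Γ]

theorem IsLeading.coeff_mul (hord : Function.Injective ord) {w₁ w₂ : QPlane k q}
    {d₁ d₂ : ℕ × ℕ} (h₁ : IsLeading ord w₁ d₁) (h₂ : IsLeading ord w₂ d₂) :
    (basis k q).repr (w₁ * w₂) (d₁ + d₂) =
      q ^ (d₁.2 * d₂.1) * (basis k q).repr w₁ d₁ * (basis k q).repr w₂ d₂ := by
  rw [basis_repr_mul, Finset.sum_eq_single (d₁, d₂) _ fun hd => ?_, if_pos rfl]
  · rintro ⟨e₁, e₂⟩ he hne
    rw [Finset.mem_product, Finsupp.mem_support_iff, Finsupp.mem_support_iff] at he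
    refine if_neg fun hsum => hne ?_
    have hle₁ := h₁.2 e₁ he.1
    have hle₂ := h₂.2 e₂ he.2
    obtain ⟨h₁e, h₂e⟩ := (add_eq_add_iff_eq_and_eq hle₁ hle₂).mp (by rw [← map_add, hsum, map_add])
    rw [hord h₁e, hord h₂e]
  · exact absurd (Finset.mem_product.mpr
      ⟨Finsupp.mem_support_iff.mpr h₁.1, Finsupp.mem_support_iff.mpr h₂.1⟩) hd

theorem IsLeading.mul (hq0 : q ≠ 0) (hord : Function.Injective ord) {w₁ w₂ : QPlane k q}
    {d₁ d₂ : ℕ × ℕ} (h₁ : IsLeading ord w₁ d₁) (h₂ : IsLeading ord w₂ d₂) :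
    IsLeading ord (w₁ * w₂) (d₁ + d₂) := by
  refine ⟨?_, fun e he => ?_⟩
  · rw [h₁.coeff_mul hord h₂]
    exact mul_ne_zero (mul_ne_zero (pow_ne_zero _ hq0) h₁.1) h₂.1
  · rw [basis_repr_mul] at he
    obtain ⟨⟨e₁, e₂⟩, he₁₂, hne⟩ := Finset.exists_ne_zero_of_sum_ne_zero he
    rw [Finset.mem_product, Finsupp.mem_support_iff, Finsupp.mem_support_iff] at he₁₂
    rw [← of_not_not fun hsum => hne (if_neg hsum), map_add, map_add]
    exact add_le_add (h₁.2 e₁ he₁₂.1) (h₂.2 e₂ he₁₂.2)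

theorem IsLeading.pow (hq0 : q ≠ 0) (hord : Function.Injective ord) {w : QPlane k q}
    {d : ℕ × ℕ} (h : IsLeading ord w d) (n : ℕ) : IsLeading ord (w ^ n) (n • d) := by
  induction n with
  | zero => simpa [basis_zero] using isLeading_basis (k := k) (q := q) (ord := ord) 0
  | succ n ih =>
    rw [pow_succ, succ_nsmul]
    exact ih.mul hq0 hord h

theorem IsLeading.orderedMonomial (hq0 : q ≠ 0) (hord : Function.Injective ord)
    {u v : QPlane k q} {du dv : ℕ × ℕ} (hu : IsLeading ord u du) (hv : IsLeading ord v dv)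
    (p : ℕ × ℕ) : IsLeading ord (orderedMonomial u v p) (p.1 • dv + p.2 • du) :=
  (hv.pow hq0 hord p.1).mul hq0 hord (hu.pow hq0 hord p.2)

theorem IsLeading.pow_eq_mul_pow_of_mul_eq_smul (hord : Function.Injective ord)
    {u v : QPlane k q} {du dv : ℕ × ℕ} (hc : u * v = q • (v * u))
    (hu : IsLeading ord u du) (hv : IsLeading ord v dv) :
    q ^ (du.2 * dv.1) = q * q ^ (dv.2 * du.1) := by
  have h := hu.coeff_mul hord hv
  rw [hc, map_smul, Finsupp.smul_apply, smul_eq_mul, add_comm, hv.coeff_mul hord hu] at h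
  refine mul_right_cancel₀ (mul_ne_zero hu.1 hv.1) ?_
  linear_combination -h

theorem leading_degrees_of_mul_eq_smul (hq0 : q ≠ 0) (hq1 : q ≠ 1) (hqm1 : q ≠ -1)
    (hord : Function.Injective ord) {u v : QPlane k q} (hc : u * v = q • (v * u))
    (hspan : Submodule.span k (Set.range (orderedMonomial u v)) = ⊤) {du dv : ℕ × ℕ}
    (hu : IsLeading ord u du) (hv : IsLeading ord v dv) : du = (0, 1) ∧ dv = (1, 0) := by
  have hrel := hu.pow_eq_mul_pow_of_mul_eq_smul hord hc hv
  have hdet : dv.1 * du.2 ≠ dv.2 * du.1 := fun h => hq1 <| by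
    rw [mul_comm du.2, h] at hrel
    exact (mul_eq_right₀ (pow_ne_zero _ hq0)).mp hrel.symm
  have hdu : du ≠ 0 := by rintro rfl; simp at hdet
  have hdv : dv ≠ 0 := by rintro rfl; simp at hdet
  have hdeg : ∀ z : ℕ × ℕ, z.1 + z.2 = 1 → dv = z ∨ du = z := by
    intro z hz
    obtain ⟨c, hcz⟩ := Finsupp.mem_span_range_iff_exists_finsupp.mp
      (hspan ▸ Submodule.mem_top : basis k q z ∈ Submodule.span k _)
    have hc0 : c ≠ 0 := by
      rintro rfl
      exact (basis k q).ne_zero z (by simpa using hcz.symm)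
    obtain ⟨p, hp⟩ := exists_isLeading_linearCombination
      (hord.comp (injective_smul_add_smul hdet)) (hu.orderedMonomial hq0 hord hv) hc0
    rw [Finsupp.linearCombination_apply, hcz] at hp
    exact eq_or_eq_of_smul_add_smul_eq hdv hdu hz (hp.eq hord (isLeading_basis z))
  rcases hdeg (0, 1) rfl with hx | hx <;> rcases hdeg (1, 0) rfl with hy | hy
  · simp [hx] at hy
  · rw [hx, hy] at hrel
    norm_num at hrel
    rcases mul_self_eq_one_iff.mp hrel.symm with h | h
    exacts [absurd h hq1, absurd h hqm1]
  · exact ⟨hx, hy⟩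
  · simp [hx] at hy

end Leading

def lexDegree : ℕ × ℕ →+ Lex (ℕ × ℕ) := (toLexAddEquiv (ℕ × ℕ)).toAddMonoidHom

def lexDegreeDual : ℕ × ℕ →+ (Lex (ℕ × ℕ))ᵒᵈ where
  toFun d := OrderDual.toDual (toLex d)
  map_zero' := rfl
  map_add' _ _ := rfl

theorem injective_lexDegree : Function.Injective lexDegree := toLex.injective

theorem injective_lexDegreeDual : Function.Injective lexDegreeDual :=
  OrderDual.toDual.injective.comp toLex.injective

theorem eq_smul_basis_of_isLeading_lexDegree {w : QPlane k q} {d : ℕ × ℕ}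
    (htop : IsLeading lexDegree w d) (hbot : IsLeading lexDegreeDual w d) :
    w = (basis k q).repr w d • basis k q d := by
  refine (basis k q).repr.injective ?_
  rw [map_smul, Module.Basis.repr_self, Finsupp.smul_single_one]
  ext e
  rw [Finsupp.single_apply]
  split_ifs with hde
  · rw [hde]
  · by_contra hne
    exact hde (injective_lexDegree (le_antisymm (htop.2 e hne) (hbot.2 e hne))).symm

theorem qpX_ne_zero : qpX k q ≠ 0 := basis_zero_one (k := k) ▸ (basis k q).ne_zero _

theorem qpY_ne_zero : qpY k q ≠ 0 := basis_one_zero (k := k) ▸ (basis k q).ne_zero _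

theorem exists_units_of_algEquiv (hq0 : q ≠ 0) (hq1 : q ≠ 1) (hqm1 : q ≠ -1)
    (φ : QPlane k q ≃ₐ[k] QPlane k q) :
    ∃ a b : kˣ, φ (qpX k q) = (a : k) • qpX k q ∧ φ (qpY k q) = (b : k) • qpY k q := by
  have hc : φ (qpX k q) * φ (qpY k q) = q • (φ (qpY k q) * φ (qpX k q)) := by
    simpa only [map_mul, map_smul] using congrArg φ qpX_mul_qpY
  have hadj : Algebra.adjoin k {φ (qpX k q), φ (qpY k q)} = ⊤ := by
    have h := Algebra.adjoin_image k (φ : QPlane k q →ₐ[k] QPlane k q) {qpX k q, qpY k q}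
    simp only [Set.image_pair, AlgEquiv.coe_toAlgHom, adjoin_qpX_qpY, Algebra.map_top] at h
    rw [h, AlgHom.range_eq_top]
    exact φ.surjective
  have hspan := span_orderedMonomial_eq_top hc hadj
  have hu0 : φ (qpX k q) ≠ 0 := (map_ne_zero_iff φ φ.injective).mpr qpX_ne_zero
  have hv0 : φ (qpY k q) ≠ 0 := (map_ne_zero_iff φ φ.injective).mpr qpY_ne_zero
  obtain ⟨du, hu⟩ := exists_isLeading (ord := lexDegree) hu0
  obtain ⟨dv, hv⟩ := exists_isLeading (ord := lexDegree) hv0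
  obtain ⟨du', hu'⟩ := exists_isLeading (ord := lexDegreeDual) hu0
  obtain ⟨dv', hv'⟩ := exists_isLeading (ord := lexDegreeDual) hv0
  obtain ⟨rfl, rfl⟩ :=
    leading_degrees_of_mul_eq_smul hq0 hq1 hqm1 injective_lexDegree hc hspan hu hv
  obtain ⟨rfl, rfl⟩ :=
    leading_degrees_of_mul_eq_smul hq0 hq1 hqm1 injective_lexDegreeDual hc hspan hu' hv'
  refine ⟨Units.mk0 _ hu.1, Units.mk0 _ hv.1, ?_, ?_⟩
  · simpa only [Units.val_mk0, basis_zero_one] using eq_smul_basis_of_isLeading_lexDegree hu hu'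
  · simpa only [Units.val_mk0, basis_one_zero] using eq_smul_basis_of_isLeading_lexDegree hv hv'

theorem algEquiv_ext {φ ψ : QPlane k q ≃ₐ[k] QPlane k q}
    (hx : φ (qpX k q) = ψ (qpX k q)) (hy : φ (qpY k q) = ψ (qpY k q)) : φ = ψ :=
  AlgEquiv.coe_toAlgHom_injective (algHom_ext hx hy)

variable (q) in
noncomputable def diagHom (a b : k) : QPlane k q →ₐ[k] QPlane k q :=
  RingQuot.liftAlgHom k ⟨FreeAlgebra.lift k ![a • qpX k q, b • qpY k q], by
    rintro _ _ ⟨⟩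
    simp only [map_mul, map_smul, FreeAlgebra.lift_ι_apply, Matrix.cons_val_zero,
      Matrix.cons_val_one, smul_mul_smul_comm, qpX_mul_qpY, smul_smul]
    ring_nf⟩

@[simp] theorem diagHom_qpX (a b : k) : diagHom q a b (qpX k q) = a • qpX k q := by
  simp [diagHom, qpX]

@[simp] theorem diagHom_qpY (a b : k) : diagHom q a b (qpY k q) = b • qpY k q := by
  simp [diagHom, qpY]

variable (k q) in
noncomputable def diagAut : kˣ × kˣ →* (QPlane k q ≃ₐ[k] QPlane k q) where
  toFun ab := AlgEquiv.ofAlgHom (diagHom q ab.1 ab.2) (diagHom q ↑ab.1⁻¹ ↑ab.2⁻¹)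
    (algHom_ext (by simp [smul_smul]) (by simp [smul_smul]))
    (algHom_ext (by simp [smul_smul]) (by simp [smul_smul]))
  map_one' := algEquiv_ext (by simp) (by simp)
  map_mul' _ _ := algEquiv_ext (by simp [smul_smul, mul_comm]) (by simp [smul_smul, mul_comm])

theorem bijective_diagAut (hq0 : q ≠ 0) (hq1 : q ≠ 1) (hqm1 : q ≠ -1) :
    Function.Bijective (diagAut k q) := by
  refine ⟨fun ab ab' h => ?_, fun φ => ?_⟩
  · have hx := congrArg (fun φ => φ (qpX k q)) h
    have hy := congrArg (fun φ => φ (qpY k q)) h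
    simp only [diagAut, MonoidHom.coe_mk, OneHom.coe_mk, AlgEquiv.ofAlgHom_apply, diagHom_qpX,
      diagHom_qpY] at hx hy
    exact Prod.ext (Units.ext (smul_left_injective k qpX_ne_zero hx))
      (Units.ext (smul_left_injective k qpY_ne_zero hy))
  · obtain ⟨a, b, hx, hy⟩ := exists_units_of_algEquiv hq0 hq1 hqm1 φ
    exact ⟨(a, b), algEquiv_ext (by simp [diagAut, hx]) (by simp [diagAut, hy])⟩

end QPlane

theorem stmt_3_general {k : Type*} [Field k] (q : k) (hq0 : q ≠ 0)
    (hq1 : q ≠ 1) (hqm1 : q ≠ -1) :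
    (∀ φ : QPlane k q ≃ₐ[k] QPlane k q,
      ∃ a b : kˣ,
        φ (qpX k q) = (a : k) • qpX k q ∧ φ (qpY k q) = (b : k) • qpY k q) ∧
    Nonempty ((QPlane k q ≃ₐ[k] QPlane k q) ≃* kˣ × kˣ) :=
  ⟨QPlane.exists_units_of_algEquiv hq0 hq1 hqm1,
    ⟨(MulEquiv.ofBijective _ (QPlane.bijective_diagAut hq0 hq1 hqm1)).symm⟩⟩

/-- for `q ∈ kˣ`, `q ∉ {1,-1}`, every `k`-algebra automorphism of the
quantum plane sends `x ↦ a·x`, `y ↦ b·y` for units `a, b`, and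
`Aut_k(Λ) ≅ (kˣ)²`. -/
theorem stmt_3 {k : Type*} [Field k] [CharZero k] (q : k) (hq0 : q ≠ 0)
    (hq1 : q ≠ 1) (hqm1 : q ≠ -1) :
    (∀ φ : QPlane k q ≃ₐ[k] QPlane k q,
      ∃ a b : kˣ,
        φ (qpX k q) = (a : k) • qpX k q ∧ φ (qpY k q) = (b : k) • qpY k q) ∧
    Nonempty ((QPlane k q ≃ₐ[k] QPlane k q) ≃* kˣ × kˣ) :=
  stmt_3_general q hq0 hq1 hqm1
end

section
/- Let Λ = D_{Q,α}[x_1^{±1},…,x_r^{±1},x_{r+1},…,x_n] be a quantum polynomial ring over a division ring D with r ≥ 1. Then an element of the form λ'·x_i^{-1} + (middle terms with exponent vectors strictly between −e_i and e_i) + λ''·x_i, with λ', λ'' ∈ D*, is not a unit of Λ. -/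
/-- Ordered monomial `x_1^{t_1} ⋯ x_n^{t_n}` with integer exponents, where negative
exponents use the designated inverses. -/
def qmono {A : Type*} [Monoid A] {n : ℕ} (X Xinv : Fin n → A) (t : Fin n → ℤ) : A :=
  ((List.finRange n).map fun i =>
    if 0 ≤ t i then X i ^ (t i).toNat else Xinv i ^ (-t i).toNat).prod

/-- `A` is a ring of skew quantum polynomials `R_{Q,σ}[x_1^{±1},…,x_r^{±1},x_{r+1},…,x_n]`:
it contains `R` (via `emb`), is generated by elements `X i` (invertible for `i < r`, with
inverses `Xinv i`) subject to `x_j x_i = q_{ji} x_i x_j` and `x_i·a = σ_i(a)·x_i`, where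
`q_{ii} = 1 = q_{ij}q_{ji}`, and it is a free left `R`-module with basis the monomials
`x^t`, `t ∈ ℤ^r × ℕ^{n-r}`. -/
structure SkewQPR (R : Type*) [Ring R] (n r : ℕ) (q : Fin n → Fin n → Rˣ)
    (σ : Fin n → R ≃+* R) (A : Type*) [Ring A] : Type _ where
  emb : R →+* A
  inj : Function.Injective emb
  X : Fin n → A
  Xinv : Fin n → A
  qdiag : ∀ i, q i i = 1
  qanti : ∀ i j, q i j * q j i = 1
  mul_inv : ∀ i : Fin n, (i : ℕ) < r → X i * Xinv i = 1
  inv_mul : ∀ i : Fin n, (i : ℕ) < r → Xinv i * X i = 1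
  comm : ∀ i j : Fin n, X j * X i = emb (q j i) * (X i * X j)
  act : ∀ (i : Fin n) (a : R), X i * emb a = emb (σ i a) * X i
  free : ∀ v : A,
    ∃! c : { t : Fin n → ℤ // ∀ i : Fin n, r ≤ (i : ℕ) → 0 ≤ t i } →₀ R,
      v = c.sum fun t a => emb a * qmono X Xinv t.1

/-- Strict lexicographic order on integer exponent vectors. -/
def lexLt {n : ℕ} (a b : Fin n → ℤ) : Prop :=
  ∃ i : Fin n, (∀ j : Fin n, j < i → a j = b j) ∧ a i < b i

/-!
All letters `x_j` and `x_j⁻¹` normalize `D` and pairwise commute up to nonzero scalars, so a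
product of two monomials `x^s x^t` is a nonzero scalar multiple of `x^(s+t)`. The lexicographic
order on exponents is compatible with addition; hence in a product `u v` the sum of the greatest
exponents of `u` and `v` is attained only once and carries a nonzero coefficient, and likewise
for the least exponents. If `u v = 1` both sums vanish, so `max u - min u = min v - max v ≤ 0`
and `u` is a single monomial, whereas the element at hand has the distinct exponents `±e_i`.
-/

/-- The exponent vectors `ℤ^r × ℕ^{n-r}` of the monomials. -/
def admissible (n r : ℕ) : AddSubmonoid (Fin n → ℤ) where
  carrier := {t | ∀ i : Fin n, r ≤ (i : ℕ) → 0 ≤ t i}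
  add_mem' hs ht i hi := add_nonneg (hs i hi) (ht i hi)
  zero_mem' _ _ := le_rfl

theorem eq_and_eq_of_add_eq_add_of_toLex_le {n r : ℕ} {s t M N : admissible n r}
    (hs : toLex (s : Fin n → ℤ) ≤ toLex (M : Fin n → ℤ))
    (ht : toLex (t : Fin n → ℤ) ≤ toLex (N : Fin n → ℤ)) (h : s + t = M + N) :
    s = M ∧ t = N := by
  have h' : toLex (s : Fin n → ℤ) + toLex (t : Fin n → ℤ) = toLex M.1 + toLex N.1 :=
    congrArg (fun x : admissible n r => toLex x.1) h
  obtain ⟨hsM, htN⟩ := (add_eq_add_iff_eq_and_eq hs ht).1 h'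
  exact ⟨Subtype.ext hsM, Subtype.ext htN⟩

theorem lexLt_irrefl {n : ℕ} (a : Fin n → ℤ) : ¬ lexLt a a :=
  fun ⟨_, _, h⟩ => lt_irrefl _ h

theorem single_one_mem_admissible {n r : ℕ} (i : Fin n) :
    (Pi.single i 1 : Fin n → ℤ) ∈ admissible n r := fun j _ => by
  simp only [Pi.single_apply]
  split_ifs <;> norm_num

theorem neg_single_one_mem_admissible {n r : ℕ} {i : Fin n} (hi : (i : ℕ) < r) :
    -(Pi.single i 1 : Fin n → ℤ) ∈ admissible n r := fun j hj => by
  simp [Pi.single_eq_of_ne (show j ≠ i by rintro rfl; omega)]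

namespace SkewQPR

variable {D A : Type*} [DivisionRing D] [Ring A] {n r : ℕ} {q : Fin n → Fin n → Dˣ}
  {σ : Fin n → D ≃+* D} (S : SkewQPR D n r q σ A)

def Proportional (x y : A) : Prop := ∃ d : D, d ≠ 0 ∧ x = S.emb d * y

def NormalizesScalars (x : A) : Prop := ∃ φ : D ≃+* D, ∀ c : D, x * S.emb c = S.emb (φ c) * x

variable {S}

theorem Proportional.refl (x : A) : S.Proportional x x := ⟨1, one_ne_zero, by simp⟩

theorem Proportional.symm {x y : A} (h : S.Proportional x y) : S.Proportional y x := by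
  obtain ⟨d, hd, rfl⟩ := h
  refine ⟨d⁻¹, inv_ne_zero hd, ?_⟩
  rw [← mul_assoc, ← map_mul, inv_mul_cancel₀ hd, map_one, one_mul]

theorem Proportional.trans {x y z : A} (hxy : S.Proportional x y) (hyz : S.Proportional y z) :
    S.Proportional x z := by
  obtain ⟨d, hd, rfl⟩ := hxy
  obtain ⟨d', hd', rfl⟩ := hyz
  exact ⟨d * d', mul_ne_zero hd hd', by rw [map_mul, mul_assoc]⟩

theorem Proportional.mul_right {x y : A} (h : S.Proportional x y) (z : A) :
    S.Proportional (x * z) (y * z) := by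
  obtain ⟨d, hd, rfl⟩ := h
  exact ⟨d, hd, mul_assoc _ _ _⟩

theorem Proportional.mul_left {x y z : A} (h : S.Proportional x y) (hz : S.NormalizesScalars z) :
    S.Proportional (z * x) (z * y) := by
  obtain ⟨d, hd, rfl⟩ := h
  obtain ⟨φ, hφ⟩ := hz
  exact ⟨φ d, (map_ne_zero φ).2 hd, by rw [← mul_assoc, hφ, mul_assoc]⟩

theorem NormalizesScalars.one : S.NormalizesScalars 1 := ⟨RingEquiv.refl D, by simp⟩

theorem NormalizesScalars.mul {x y : A} (hx : S.NormalizesScalars x)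
    (hy : S.NormalizesScalars y) : S.NormalizesScalars (x * y) := by
  obtain ⟨φ, hφ⟩ := hx
  obtain ⟨ψ, hψ⟩ := hy
  exact ⟨ψ.trans φ, fun c => by rw [mul_assoc, hψ, ← mul_assoc, hφ, mul_assoc]; rfl⟩

theorem Proportional.inv_left {u u' w : A} (huu' : u * u' = 1) (hu'u : u' * u = 1)
    (hu' : S.NormalizesScalars u') (h : S.Proportional (u * w) (w * u)) :
    S.Proportional (u' * w) (w * u') := by
  have h' := (h.symm.mul_right u').mul_left hu'
  rw [mul_assoc w, huu', mul_one, ← mul_assoc, ← mul_assoc, hu'u, one_mul] at h'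
  simpa only [mul_assoc] using h'

variable (S)

theorem Xinv_mul_emb {j : Fin n} (hj : (j : ℕ) < r) (c : D) :
    S.Xinv j * S.emb c = S.emb ((σ j).symm c) * S.Xinv j := by
  have h := S.act j ((σ j).symm c)
  rw [RingEquiv.apply_symm_apply] at h
  calc S.Xinv j * S.emb c = S.Xinv j * (S.emb c * S.X j) * S.Xinv j := by
        rw [mul_assoc, mul_assoc, S.mul_inv j hj, mul_one]
    _ = S.emb ((σ j).symm c) * S.Xinv j := by
        rw [← h, ← mul_assoc, S.inv_mul j hj, one_mul]

def letters : Set A := Set.range S.X ∪ S.Xinv '' {j | (j : ℕ) < r}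

/-- The monomials, up to nonzero scalar factors. -/
def monomials : Submonoid A := Submonoid.closure S.letters

theorem normalizesScalars_of_mem_monomials {x : A} (hx : x ∈ S.monomials) :
    S.NormalizesScalars x := by
  induction hx using Submonoid.closure_induction with
  | mem x hx =>
    rcases hx with ⟨j, rfl⟩ | ⟨j, hj, rfl⟩
    · exact ⟨σ j, S.act j⟩
    · exact ⟨(σ j).symm, S.Xinv_mul_emb hj⟩
  | one => exact .one
  | mul x y _ _ hx hy => exact hx.mul hy

theorem proportional_X_mul_X (k j : Fin n) :
    S.Proportional (S.X k * S.X j) (S.X j * S.X k) :=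
  ⟨q k j, Units.ne_zero _, S.comm j k⟩

theorem proportional_Xinv_mul {k : Fin n} (hk : (k : ℕ) < r) {w : A}
    (h : S.Proportional (S.X k * w) (w * S.X k)) :
    S.Proportional (S.Xinv k * w) (w * S.Xinv k) :=
  h.inv_left (S.mul_inv k hk) (S.inv_mul k hk) ⟨(σ k).symm, S.Xinv_mul_emb hk⟩

theorem proportional_mul_comm_of_mem_letters {x y : A} (hx : x ∈ S.letters)
    (hy : y ∈ S.letters) : S.Proportional (x * y) (y * x) := by
  have hX : ∀ k, S.Proportional (S.X k * y) (y * S.X k) := by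
    rcases hy with ⟨j, rfl⟩ | ⟨j, hj, rfl⟩
    · exact fun k => S.proportional_X_mul_X k j
    · exact fun k => (S.proportional_Xinv_mul hj (S.proportional_X_mul_X j k)).symm
  rcases hx with ⟨k, rfl⟩ | ⟨k, hk, rfl⟩
  · exact hX k
  · exact S.proportional_Xinv_mul hk (hX k)

theorem proportional_mul_comm_of_mem_closure {s : Set A} {x : A}
    (hs : ∀ y ∈ Submonoid.closure s, S.NormalizesScalars y)
    (hx : ∀ y ∈ s, S.Proportional (x * y) (y * x)) {y : A} (hy : y ∈ Submonoid.closure s) :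
    S.Proportional (x * y) (y * x) := by
  induction hy using Submonoid.closure_induction with
  | mem y hy => exact hx y hy
  | one => simpa using Proportional.refl x
  | mul y z hy_mem _ hy hz =>
    have hyz : S.Proportional (y * x * z) (y * z * x) := by
      simpa only [mul_assoc] using hz.mul_left (hs y hy_mem)
    simpa only [mul_assoc] using (hy.mul_right z).trans hyz

theorem proportional_mul_comm_of_mem_monomials {x y : A} (hx : x ∈ S.monomials)
    (hy : y ∈ S.monomials) : S.Proportional (x * y) (y * x) := by
  have hnormal := fun z (hz : z ∈ S.monomials) => S.normalizesScalars_of_mem_monomials hz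
  refine S.proportional_mul_comm_of_mem_closure hnormal (fun y' hy' => ?_) hy
  exact (S.proportional_mul_comm_of_mem_closure hnormal
    (fun x' hx' => S.proportional_mul_comm_of_mem_letters hy' hx') hx).symm

theorem proportional_prod_mul_prod {ι : Type*} {f g : ι → A} (hf : ∀ i, f i ∈ S.monomials)
    (hg : ∀ i, g i ∈ S.monomials) (L : List ι) :
    S.Proportional ((L.map f).prod * (L.map g).prod) ((L.map fun i => f i * g i).prod) := by
  induction L with
  | nil => simpa using Proportional.refl (1 : A)
  | cons a L ih =>
    set P := (L.map f).prod
    have hP : P ∈ S.monomials := Submonoid.list_prod_mem _ (by simpa using fun i _ => hf i)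
    have hswap := ((S.proportional_mul_comm_of_mem_monomials hP (hg a)).mul_right
      (L.map g).prod).mul_left (S.normalizesScalars_of_mem_monomials (hf a))
    have hrest := ih.mul_left
      (S.normalizesScalars_of_mem_monomials (mul_mem (hf a) (hg a)))
    simp only [List.map_cons, List.prod_cons]
    simpa only [mul_assoc] using hswap.trans (by simpa only [mul_assoc] using hrest)

def factor (t : Fin n → ℤ) (i : Fin n) : A :=
  if 0 ≤ t i then S.X i ^ (t i).toNat else S.Xinv i ^ (-t i).toNat

theorem qmono_eq_prod_factor (t : Fin n → ℤ) :
    qmono S.X S.Xinv t = ((List.finRange n).map (S.factor t)).prod :=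
  rfl

def unitX (i : Fin n) (hi : (i : ℕ) < r) : Aˣ :=
  ⟨S.X i, S.Xinv i, S.mul_inv i hi, S.inv_mul i hi⟩

theorem factor_eq_unitX_zpow {i : Fin n} (hi : (i : ℕ) < r) (t : Fin n → ℤ) :
    S.factor t i = ↑(S.unitX i hi ^ t i) := by
  unfold factor
  split_ifs with h
  · conv_rhs => rw [← Int.toNat_of_nonneg h]
    rw [zpow_natCast, Units.val_pow_eq_pow_val]
    rfl
  · conv_rhs => rw [← neg_neg (t i), ← Int.toNat_of_nonneg (neg_nonneg.2 (not_le.1 h).le)]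
    rw [zpow_neg, zpow_natCast, ← inv_pow, Units.val_pow_eq_pow_val]
    rfl

theorem factor_mul_factor {s t : Fin n → ℤ} (hs : s ∈ admissible n r) (ht : t ∈ admissible n r)
    (i : Fin n) : S.factor s i * S.factor t i = S.factor (s + t) i := by
  by_cases hi : (i : ℕ) < r
  · simp only [S.factor_eq_unitX_zpow hi, ← Units.val_mul, ← zpow_add, Pi.add_apply]
  · have hsi := hs i (not_lt.1 hi)
    have hti := ht i (not_lt.1 hi)
    simp [factor, hsi, hti, add_nonneg, Int.toNat_add, pow_add]

theorem factor_mem_monomials {t : Fin n → ℤ} (ht : t ∈ admissible n r) (i : Fin n) :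
    S.factor t i ∈ S.monomials := by
  unfold factor
  split_ifs with h
  · exact pow_mem (Submonoid.subset_closure (show S.X i ∈ S.letters from Or.inl ⟨i, rfl⟩)) _
  · have hi : (i : ℕ) < r := not_le.1 fun hi => h (ht i hi)
    exact pow_mem (Submonoid.subset_closure
      (show S.Xinv i ∈ S.letters from Or.inr ⟨i, hi, rfl⟩)) _

theorem qmono_mem_monomials {t : Fin n → ℤ} (ht : t ∈ admissible n r) :
    qmono S.X S.Xinv t ∈ S.monomials := by
  rw [qmono_eq_prod_factor]
  exact Submonoid.list_prod_mem _ (by simp [S.factor_mem_monomials ht])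

theorem qmono_zero : qmono S.X S.Xinv (0 : Fin n → ℤ) = 1 := by
  simp [qmono]

theorem proportional_qmono_mul_qmono {s t : Fin n → ℤ} (hs : s ∈ admissible n r)
    (ht : t ∈ admissible n r) :
    S.Proportional (qmono S.X S.Xinv s * qmono S.X S.Xinv t) (qmono S.X S.Xinv (s + t)) := by
  simpa only [qmono_eq_prod_factor, S.factor_mul_factor hs ht] using
    S.proportional_prod_mul_prod (S.factor_mem_monomials hs) (S.factor_mem_monomials ht)
      (List.finRange n)

theorem emb_mul_qmono_mul_emb_mul_qmono {s t : Fin n → ℤ} (hs : s ∈ admissible n r)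
    (ht : t ∈ admissible n r) (a b : D) :
    ∃ c : D, (a ≠ 0 → b ≠ 0 → c ≠ 0) ∧
      S.emb a * qmono S.X S.Xinv s * (S.emb b * qmono S.X S.Xinv t)
        = S.emb c * qmono S.X S.Xinv (s + t) := by
  obtain ⟨φ, hφ⟩ := S.normalizesScalars_of_mem_monomials (S.qmono_mem_monomials hs)
  obtain ⟨d, hd, h⟩ := S.proportional_qmono_mul_qmono hs ht
  refine ⟨a * φ b * d, fun ha hb => mul_ne_zero (mul_ne_zero ha ((map_ne_zero φ).2 hb)) hd, ?_⟩
  rw [mul_assoc, ← mul_assoc (qmono _ _ s), hφ, mul_assoc, h]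
  simp only [map_mul, mul_assoc]

noncomputable def linearCombination : (admissible n r →₀ D) →+ A :=
  Finsupp.liftAddHom fun t =>
    (AddMonoidHom.mulRight (qmono S.X S.Xinv t)).comp S.emb.toAddMonoidHom

theorem linearCombination_apply (F : admissible n r →₀ D) :
    S.linearCombination F = F.sum fun t a => S.emb a * qmono S.X S.Xinv t :=
  Finsupp.liftAddHom_apply _ _

theorem linearCombination_single (t : admissible n r) (a : D) :
    S.linearCombination (Finsupp.single t a) = S.emb a * qmono S.X S.Xinv t :=
  Finsupp.liftAddHom_apply_single _ _ _

theorem linearCombination_bijective : Function.Bijective S.linearCombination := by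
  refine ⟨fun F G h => ?_, fun v => ?_⟩
  · obtain ⟨c, -, hc⟩ := S.free (S.linearCombination F)
    exact (hc F (S.linearCombination_apply F)).trans
      (hc G (h.trans (S.linearCombination_apply G))).symm
  · obtain ⟨c, hc, -⟩ := S.free v
    exact ⟨c, (S.linearCombination_apply c).trans hc.symm⟩

noncomputable def repr : A ≃+ (admissible n r →₀ D) :=
  (AddEquiv.ofBijective S.linearCombination S.linearCombination_bijective).symm

theorem repr_linearCombination (F : admissible n r →₀ D) :
    S.repr (S.linearCombination F) = F :=
  (AddEquiv.ofBijective S.linearCombination S.linearCombination_bijective).symm_apply_apply F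

theorem repr_one : S.repr 1 = Finsupp.single 0 1 := by
  rw [← S.repr_linearCombination (Finsupp.single 0 1), S.linearCombination_single,
    (S.emb).map_one, one_mul, ZeroMemClass.coe_zero, qmono_zero]

theorem repr_mul_apply_ne_zero {F G : admissible n r →₀ D} {M N : admissible n r}
    (hM : M ∈ F.support) (hN : N ∈ G.support)
    (huniq : ∀ s ∈ F.support, ∀ t ∈ G.support, s + t = M + N → s = M ∧ t = N) :
    S.repr (S.linearCombination F * S.linearCombination G) (M + N) ≠ 0 := by
  classical
  choose c hc_ne hc using fun s t : admissible n r =>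
    S.emb_mul_qmono_mul_emb_mul_qmono s.2 t.2 (F s) (G t)
  have hprod : S.linearCombination F * S.linearCombination G = S.linearCombination
      (∑ p ∈ F.support ×ˢ G.support, Finsupp.single (p.1 + p.2) (c p.1 p.2)) := by
    rw [S.linearCombination_apply, S.linearCombination_apply, Finsupp.sum, Finsupp.sum,
      Finset.sum_mul_sum, map_sum, Finset.sum_product]
    refine Finset.sum_congr rfl fun s _ => Finset.sum_congr rfl fun t _ => ?_
    rw [S.linearCombination_single, hc]
    rfl
  rw [hprod, S.repr_linearCombination, Finsupp.finsetSum_apply,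
    Finset.sum_eq_single_of_mem (M, N) (Finset.mem_product.2 ⟨hM, hN⟩)]
  · simpa using hc_ne M N (Finsupp.mem_support_iff.1 hM) (Finsupp.mem_support_iff.1 hN)
  · rintro ⟨s, t⟩ hst hne
    rw [Finsupp.single_apply, if_neg]
    obtain ⟨hs, ht⟩ := Finset.mem_product.1 hst
    exact fun h => hne (Prod.ext_iff.2 (huniq s hs t ht h))

theorem add_eq_zero_of_mul_eq_one {F G : admissible n r →₀ D}
    (h : S.linearCombination F * S.linearCombination G = 1) {M N : admissible n r}
    (hM : M ∈ F.support) (hN : N ∈ G.support)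
    (huniq : ∀ s ∈ F.support, ∀ t ∈ G.support, s + t = M + N → s = M ∧ t = N) :
    M + N = 0 := by
  classical
  have hne := S.repr_mul_apply_ne_zero hM hN huniq
  rw [h, S.repr_one, Finsupp.single_apply] at hne
  exact (ite_ne_right_iff.1 hne).1.symm

theorem support_subsingleton_of_isUnit {F : admissible n r →₀ D}
    (hF : IsUnit (S.linearCombination F)) : (F.support : Set (admissible n r)).Subsingleton := by
  obtain ⟨v, hv⟩ := hF.exists_right_inv
  obtain ⟨G, rfl⟩ := S.linearCombination_bijective.2 v
  have : Nontrivial A := S.inj.nontrivial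
  have hG : G.support.Nonempty := by
    rw [Finsupp.support_nonempty_iff]
    rintro rfl
    simp at hv
  intro s hs t ht
  let ex : admissible n r → Lex (Fin n → ℤ) := fun x => toLex x.1
  obtain ⟨M, hM, hM_max⟩ := F.support.exists_max_image ex ⟨s, hs⟩
  obtain ⟨m, hm, hm_min⟩ := F.support.exists_min_image ex ⟨s, hs⟩
  obtain ⟨N, hN, hN_max⟩ := G.support.exists_max_image ex hG
  obtain ⟨N', hN', hN'_min⟩ := G.support.exists_min_image ex hG
  have hMN : ex M + ex N = 0 := congrArg ex <| S.add_eq_zero_of_mul_eq_one hv hM hN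
    fun s hs t ht h => eq_and_eq_of_add_eq_add_of_toLex_le (hM_max s hs) (hN_max t ht) h
  have hmN' : ex m + ex N' = 0 := congrArg ex <| S.add_eq_zero_of_mul_eq_one hv hm hN'
    fun s hs t ht h => (eq_and_eq_of_add_eq_add_of_toLex_le (hm_min s hs) (hN'_min t ht)
      h.symm).imp Eq.symm Eq.symm
  have hMm : ex M ≤ ex m := by
    rw [eq_neg_of_add_eq_zero_left hMN, eq_neg_of_add_eq_zero_left hmN']
    exact neg_le_neg (hN'_min N hN)
  have hconst : ∀ x ∈ F.support, x = M := fun x hx =>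
    Subtype.ext (toLex.injective ((hM_max x hx).antisymm (hMm.trans (hm_min x hx))))
  rw [hconst s hs, hconst t ht]

end SkewQPR

theorem stmt_16_general {D A : Type*} [DivisionRing D] [Ring A] {n r : ℕ}
    (q : Fin n → Fin n → Dˣ) (σ : Fin n → D ≃+* D)
    (S : SkewQPR D n r q σ A) (i : Fin n) (hi : (i : ℕ) < r)
    (lam' lam'' : D) (hlam' : lam' ≠ 0) (hlam'' : lam'' ≠ 0)
    (c : (Fin n → ℤ) →₀ D)
    (hc : ∀ t ∈ c.support,
      (∀ j : Fin n, r ≤ (j : ℕ) → 0 ≤ t j) ∧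
      lexLt (-(Pi.single i 1 : Fin n → ℤ)) t ∧ lexLt t (Pi.single i 1 : Fin n → ℤ)) :
    ¬ IsUnit (S.emb lam' * qmono S.X S.Xinv (-(Pi.single i 1 : Fin n → ℤ)) +
        c.sum (fun t a => S.emb a * qmono S.X S.Xinv t) +
        S.emb lam'' * qmono S.X S.Xinv (Pi.single i 1 : Fin n → ℤ)) := by
  classical
  set e : Fin n → ℤ := Pi.single i 1
  let E : admissible n r := ⟨e, single_one_mem_admissible i⟩
  let E' : admissible n r := ⟨-e, neg_single_one_mem_admissible hi⟩
  have hEE' : E' ≠ E := fun h => by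
    simpa [E, E', e] using congrFun (congrArg Subtype.val h) i
  have hc_e : c e = 0 := Finsupp.notMem_support_iff.1 fun h => lexLt_irrefl e (hc e h).2.2
  have hc_neg_e : c (-e) = 0 :=
    Finsupp.notMem_support_iff.1 fun h => lexLt_irrefl _ (hc _ h).2.1
  set F := Finsupp.single E' lam' + c.subtypeDomain (· ∈ admissible n r) +
    Finsupp.single E lam'' with hF_def
  have hF : S.emb lam' * qmono S.X S.Xinv (-e) + c.sum (fun t a => S.emb a * qmono S.X S.Xinv t)
      + S.emb lam'' * qmono S.X S.Xinv e = S.linearCombination F := by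
    have hsum := Finsupp.sum_subtypeDomain_index (p := (· ∈ admissible n r))
      (h := fun t a => S.emb a * qmono S.X S.Xinv t) fun t ht => (hc t ht).1
    rw [hF_def, map_add, map_add, S.linearCombination_single, S.linearCombination_single,
      S.linearCombination_apply, hsum]
  have hE : E ∈ F.support := by simp [F, E, hEE', hc_e, hlam'']
  have hE' : E' ∈ F.support := by simp [F, E', hEE'.symm, hc_neg_e, hlam']
  rw [hF]
  exact fun hU => hEE' (S.support_subsingleton_of_isUnit hU hE' hE)

/-- in a quantum polynomial ring `Λ` over a division ring `D` with `r ≥ 1`,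
an element `λ'·x_i⁻¹ + (middle terms with exponent vectors strictly between `−e_i` and
`e_i`) + λ''·x_i`, with `λ', λ'' ∈ D*`, is not a unit. -/
theorem stmt_16 {D A : Type*} [DivisionRing D] [Ring A] {n r : ℕ} (hrn : r ≤ n)
    (hr : 1 ≤ r) (q : Fin n → Fin n → Dˣ) (σ : Fin n → D ≃+* D)
    (S : SkewQPR D n r q σ A) (i : Fin n) (hi : (i : ℕ) < r)
    (lam' lam'' : D) (hlam' : lam' ≠ 0) (hlam'' : lam'' ≠ 0)
    (c : (Fin n → ℤ) →₀ D)
    (hc : ∀ t ∈ c.support,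
      (∀ j : Fin n, r ≤ (j : ℕ) → 0 ≤ t j) ∧
      lexLt (-(Pi.single i 1 : Fin n → ℤ)) t ∧ lexLt t (Pi.single i 1 : Fin n → ℤ)) :
    ¬ IsUnit (S.emb lam' * qmono S.X S.Xinv (-(Pi.single i 1 : Fin n → ℤ)) +
        c.sum (fun t a => S.emb a * qmono S.X S.Xinv t) +
        S.emb lam'' * qmono S.X S.Xinv (Pi.single i 1 : Fin n → ℤ)) :=
  stmt_16_general q σ S i hi lam' lam'' hlam' hlam'' c hc
end
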